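/- Let A ∈ ℂ^{m×n×p}, W ∈ ℂ^{n×m×p}, rank_M(A) = rp, rank_M(W) = sp with sp ≤ rp. Suppose W *_M P = Q *_M R where: P ∈ ℂ^{m×m×p} satisfies P *_M P^* = I_M = P^* *_M P; Q ∈ ℂ^{n×n×p} satisfies Q *_M Q^* = I_M = Q^* *_M Q; R ∈ ℂ^{n×m×p} has rank_M(R) = sp and its horizontal slices s+1,…,n vanish. Let Q̃ = Q(:,1:s,:) and R̃ = R(1:s,:,:), and suppose rank_M(R̃) = sp. If there exists an outer inverse X of A with R_M(X) = R_M(W) and N_M(X) = N_M(W), then Q̃^* *_M W *_M A *_M Q̃ ∈ ℂ^{s×s×p} is invertible and X = Q̃ *_M (Q̃^* *_M W *_M A *_M Q̃)^{-1} *_M Q̃^* *_M W. -/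

import Mathlib

/-!
The map `mat` is injective, multiplicative, and compatible with `*` and `I_M`, so the theorem
reduces to a statement about the matrices `U = mat(Q̃)` and `B = mat(R̃) mat(P)^*`. Because the
trailing horizontal slices of `R` vanish, `mat(W) = U B`, where `U^* U = I` and `rank B = sp`.
The range condition gives `U U^* X = X` and the kernel condition gives `W A X = W`. Hence
`T = U^* W A U` satisfies `T (U^* X) = U^* W = B`, so `T` has full rank `sp` and is invertible,
and `X = U U^* X = U T⁻¹ U^* W`. The inverse of the block-diagonal `mat(T)` is again block
diagonal, so it is `mat` of a tensor.
-/

open Matrix Finset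

/-- A third-order tensor in `ℂ^{m×n×p}`, given by its `p` frontal slices. -/
abbrev Tensor (m n p : ℕ) := Fin p → Matrix (Fin m) (Fin n) ℂ

/-- The transform `Â = A ×₃ M` (mode-3 product with `M`). -/
noncomputable def hatT {m n p : ℕ} (M : Matrix (Fin p) (Fin p) ℂ) (A : Tensor m n p) :
    Tensor m n p :=
  fun l => ∑ s, M l s • A s

/-- `mat(A)`: the block-diagonal matrix whose blocks are frontal slices of `A ×₃ M`. -/
noncomputable def matT {m n p : ℕ} (M : Matrix (Fin p) (Fin p) ℂ) (A : Tensor m n p) :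
    Matrix (Fin m × Fin p) (Fin n × Fin p) ℂ :=
  Matrix.blockDiagonal (hatT M A)

/-- The M-product `A *_M B`, determined by `mat(A *_M B) = mat(A)·mat(B)`. -/
noncomputable def mprod {m n k p : ℕ} (M : Matrix (Fin p) (Fin p) ℂ)
    (A : Tensor m n p) (B : Tensor n k p) : Tensor m k p :=
  fun l => ∑ s, M⁻¹ l s • (hatT M A s * hatT M B s)

/-- The conjugate transpose `A^*`, determined by `mat(A^*) = mat(A)^*`. -/
noncomputable def mstar {m n p : ℕ} (M : Matrix (Fin p) (Fin p) ℂ) (A : Tensor m n p) :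
    Tensor n m p :=
  fun l => ∑ s, M⁻¹ l s • (hatT M A s)ᴴ

/-- The identity tensor `I_M ∈ ℂ^{m×m×p}`, determined by `mat(I_M) = I`. -/
noncomputable def idT {p : ℕ} (M : Matrix (Fin p) (Fin p) ℂ) (m : ℕ) : Tensor m m p :=
  fun l => ∑ s, M⁻¹ l s • (1 : Matrix (Fin m) (Fin m) ℂ)

/-- M-product powers of a square tensor. -/
noncomputable def mpow {m p : ℕ} (M : Matrix (Fin p) (Fin p) ℂ) (A : Tensor m m p) :
    ℕ → Tensor m m p
  | 0 => idT M m
  | k + 1 => mprod M A (mpow M A k)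

/-- `R_M(A)`: the column space of `mat(A)`. -/
noncomputable def rangeM {m n p : ℕ} (M : Matrix (Fin p) (Fin p) ℂ) (A : Tensor m n p) :
    Submodule ℂ (Fin m × Fin p → ℂ) :=
  LinearMap.range (matT M A).mulVecLin

/-- `N_M(A)`: the kernel of `mat(A)`. -/
noncomputable def kerM {m n p : ℕ} (M : Matrix (Fin p) (Fin p) ℂ) (A : Tensor m n p) :
    Submodule ℂ (Fin n × Fin p → ℂ) :=
  LinearMap.ker (matT M A).mulVecLin

/-- `rank_M(A) = rank(mat(A))`. -/
noncomputable def rankM {m n p : ℕ} (M : Matrix (Fin p) (Fin p) ℂ) (A : Tensor m n p) : ℕ :=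
  (matT M A).rank

/-- The first `s` lateral slices `Q(:,1:s,:)`. -/
def latSlice {n s p : ℕ} (hsn : s ≤ n) (Q : Tensor n n p) : Tensor n s p :=
  fun l => (Q l).submatrix id (Fin.castLE hsn)

/-- The first `s` horizontal slices `R(1:s,:,:)`. -/
def horSlice {n m s p : ℕ} (hsn : s ≤ n) (R : Tensor n m p) : Tensor s m p :=
  fun l => (R l).submatrix (Fin.castLE hsn) id

/-- Frobenius norm of a complex matrix. -/
noncomputable def frobNorm {α β : Type*} [Fintype α] [Fintype β] (X : Matrix α β ℂ) : ℝ :=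
  Real.sqrt (∑ i, ∑ j, ‖X i j‖ ^ 2)

namespace Matrix

variable {K l m n s : Type*}

theorem mul_eq_submatrix_mul_submatrix [Fintype n] [Fintype s] [NonUnitalNonAssocSemiring K]
    (A : Matrix m n K) (B : Matrix n l K) {e : s → n} (he : Function.Injective e)
    (hB : ∀ i ∉ Set.range e, ∀ j, B i j = 0) :
    A * B = A.submatrix id e * B.submatrix e id := by
  ext i j
  exact (Fintype.sum_of_injective e he _ _ (fun k hk => by simp [hB k hk]) fun _ => rfl).symm

theorem conjTranspose_submatrix_mul_submatrix_eq_one [Fintype n] [DecidableEq n] [DecidableEq s]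
    [Semiring K] [Star K] {U : Matrix n n K} (hU : Uᴴ * U = 1) {e : s → n}
    (he : Function.Injective e) : (U.submatrix id e)ᴴ * U.submatrix id e = 1 := by
  rw [conjTranspose_submatrix, ← submatrix_mul _ _ _ _ _ Function.bijective_id, hU,
    submatrix_one _ he]

theorem isUnit_of_rank_eq_card [Field K] [Fintype n] [DecidableEq n] {A : Matrix n n K}
    (h : A.rank = Fintype.card n) : IsUnit A := by
  rw [← mulVec_surjective_iff_isUnit, ← coe_mulVecLin, ← LinearMap.range_eq_top]
  apply Submodule.eq_top_of_finrank_eq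
  rwa [Module.finrank_fintype_fun_eq_card]

theorem mul_mul_eq_of_ker_le [CommRing K] [Fintype m] [Fintype n] {A : Matrix m n K}
    {W X : Matrix n m K} (hX : X * A * X = X)
    (h : LinearMap.ker X.mulVecLin ≤ LinearMap.ker W.mulVecLin) : W * A * X = W := by
  rw [ext_iff_mulVec]
  intro v
  have hv : (A * X) *ᵥ v - v ∈ LinearMap.ker X.mulVecLin := by
    simp [mulVec_sub, mulVec_mulVec, ← Matrix.mul_assoc, hX]
  simpa [mulVec_sub, mulVec_mulVec, sub_eq_zero, Matrix.mul_assoc] using h hv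

theorem mul_mul_eq_of_range_le [CommSemiring K] [Fintype m] [Fintype n] [Fintype s]
    [DecidableEq s] {U : Matrix n s K} {L : Matrix s n K} {X : Matrix n m K} (hLU : L * U = 1)
    (h : LinearMap.range X.mulVecLin ≤ LinearMap.range U.mulVecLin) : U * L * X = X := by
  rw [ext_iff_mulVec]
  intro v
  obtain ⟨u, hu⟩ := h ⟨v, rfl⟩
  rw [mulVecLin_apply, mulVecLin_apply] at hu
  rw [← mulVec_mulVec, ← hu, mulVec_mulVec, Matrix.mul_assoc, hLU, Matrix.mul_one]

theorem isUnit_and_eq_of_outerInverse [Field K] [Fintype m] [Fintype n] [Fintype s]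
    [DecidableEq s] {A : Matrix m n K} {W X : Matrix n m K} {U : Matrix n s K}
    {L : Matrix s n K} {B : Matrix s m K} (hLU : L * U = 1) (hW : W = U * B)
    (hB : B.rank = Fintype.card s) (hX : X * A * X = X)
    (hrange : LinearMap.range X.mulVecLin ≤ LinearMap.range W.mulVecLin)
    (hker : LinearMap.ker X.mulVecLin ≤ LinearMap.ker W.mulVecLin) :
    IsUnit (L * W * A * U) ∧ X = U * (L * W * A * U)⁻¹ * (L * W) := by
  have hWU : LinearMap.range W.mulVecLin ≤ LinearMap.range U.mulVecLin := by
    rw [hW, mulVecLin_mul]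
    exact LinearMap.range_comp_le_range _ _
  have hULX : U * L * X = X := mul_mul_eq_of_range_le hLU (hrange.trans hWU)
  have hWAX : W * A * X = W := mul_mul_eq_of_ker_le hX hker
  have hT : L * W * A * U * (L * X) = L * W := by
    calc L * W * A * U * (L * X) = L * (W * A * (U * L * X)) := by simp only [Matrix.mul_assoc]
      _ = L * W := by rw [hULX, hWAX]
  have hLW : L * W = B := by rw [hW, ← Matrix.mul_assoc, hLU, Matrix.one_mul]
  have hunit : IsUnit (L * W * A * U) := by
    refine isUnit_of_rank_eq_card (le_antisymm (rank_le_card_height _) ?_)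
    calc Fintype.card s = (L * W * A * U * (L * X)).rank := by rw [hT, hLW, hB]
      _ ≤ (L * W * A * U).rank := rank_mul_le_left _ _
  refine ⟨hunit, ?_⟩
  rw [isUnit_iff_isUnit_det] at hunit
  calc X = U * (L * W * A * U)⁻¹ * (L * W * A * U * (L * X)) := by
        rw [← Matrix.mul_assoc, Matrix.mul_assoc U, nonsing_inv_mul _ hunit, Matrix.mul_one,
          ← Matrix.mul_assoc, hULX]
    _ = U * (L * W * A * U)⁻¹ * (L * W) := by rw [hT]

end Matrix

section Transform

variable {m n k p : ℕ} {M : Matrix (Fin p) (Fin p) ℂ}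

theorem hatT_hatT (M N : Matrix (Fin p) (Fin p) ℂ) (A : Tensor m n p) :
    hatT M (hatT N A) = hatT (M * N) A := by
  funext l
  simp only [hatT, Finset.smul_sum, smul_smul, mul_apply, Finset.sum_smul]
  exact Finset.sum_comm

theorem hatT_one (A : Tensor m n p) : hatT 1 A = A := by
  funext l
  simp [hatT, one_apply, ite_smul]

theorem hatT_hatT_inv (hM : IsUnit M.det) (A : Tensor m n p) : hatT M (hatT M⁻¹ A) = A := by
  rw [hatT_hatT, mul_nonsing_inv _ hM, hatT_one]

theorem hatT_injective (hM : IsUnit M.det) : Function.Injective (hatT (m := m) (n := n) M) :=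
  fun A B h => by rw [← hatT_one A, ← hatT_one B, ← nonsing_inv_mul _ hM, ← hatT_hatT,
    ← hatT_hatT, h]

theorem matT_injective (hM : IsUnit M.det) : Function.Injective (matT (m := m) (n := n) M) :=
  blockDiagonal_injective.comp (hatT_injective hM)

theorem matT_mprod (hM : IsUnit M.det) (A : Tensor m n p) (B : Tensor n k p) :
    matT M (mprod M A B) = matT M A * matT M B := by
  rw [matT, matT, matT, ← blockDiagonal_mul]
  exact congrArg blockDiagonal (hatT_hatT_inv hM _)

theorem matT_mstar (hM : IsUnit M.det) (A : Tensor m n p) :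
    matT M (mstar M A) = (matT M A)ᴴ := by
  rw [matT, matT, blockDiagonal_conjTranspose]
  exact congrArg blockDiagonal (hatT_hatT_inv hM _)

theorem matT_idT (hM : IsUnit M.det) : matT M (idT M m) = 1 := by
  rw [matT, ← blockDiagonal_one]
  exact congrArg blockDiagonal (hatT_hatT_inv hM _)

theorem exists_matT_eq_inv (hM : IsUnit M.det) {T : Tensor m m p} (hT : IsUnit (matT M T)) :
    ∃ Y : Tensor m m p, matT M Y = (matT M T)⁻¹ := by
  have hblocks : ∀ l, IsUnit (hatT M T l).det := by
    rw [isUnit_iff_isUnit_det, matT, det_blockDiagonal, IsUnit.prod_iff] at hT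
    exact fun l => hT l (Finset.mem_univ l)
  refine ⟨hatT M⁻¹ fun l => (hatT M T l)⁻¹, (inv_eq_right_inv ?_).symm⟩
  rw [matT, matT, hatT_hatT_inv hM, ← blockDiagonal_mul, ← blockDiagonal_one]
  exact congrArg blockDiagonal (funext fun l => mul_nonsing_inv _ (hblocks l))

theorem matT_latSlice {s : ℕ} (hsn : s ≤ n) (Q : Tensor n n p) :
    matT M (latSlice hsn Q) = (matT M Q).submatrix id (Prod.map (Fin.castLE hsn) id) := by
  ext ⟨i, l⟩ ⟨j, l'⟩
  simp [matT, hatT, latSlice, blockDiagonal_apply, Matrix.sum_apply]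

theorem matT_horSlice {s : ℕ} (hsn : s ≤ n) (R : Tensor n m p) :
    matT M (horSlice hsn R) = (matT M R).submatrix (Prod.map (Fin.castLE hsn) id) id := by
  ext ⟨i, l⟩ ⟨j, l'⟩
  simp [matT, hatT, horSlice, blockDiagonal_apply, Matrix.sum_apply]

theorem conjTranspose_matT_latSlice_mul_self (hM : IsUnit M.det) {s : ℕ} (hsn : s ≤ n)
    {Q : Tensor n n p} (hQ : mprod M (mstar M Q) Q = idT M n) :
    (matT M (latSlice hsn Q))ᴴ * matT M (latSlice hsn Q) = 1 := by
  rw [matT_latSlice]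
  refine conjTranspose_submatrix_mul_submatrix_eq_one ?_
    (Fin.castLE_injective hsn |>.prodMap Function.injective_id)
  rw [← matT_mstar hM, ← matT_mprod hM, hQ, matT_idT hM]

theorem mprod_latSlice_horSlice (hM : IsUnit M.det) {s : ℕ} (hsn : s ≤ n) (Q : Tensor n n p)
    (R : Tensor n m p) (hR : ∀ l (i : Fin n), s ≤ (i : ℕ) → ∀ j, R l i j = 0) :
    mprod M (latSlice hsn Q) (horSlice hsn R) = mprod M Q R := by
  apply matT_injective hM
  rw [matT_mprod hM, matT_mprod hM, matT_latSlice, matT_horSlice,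
    mul_eq_submatrix_mul_submatrix _ _ (Fin.castLE_injective hsn |>.prodMap Function.injective_id)]
  rintro ⟨i, l⟩ hi ⟨j, l'⟩
  have hsi : s ≤ (i : ℕ) := by
    by_contra! h
    exact hi ⟨(⟨i, h⟩, l), rfl⟩
  simp [matT, hatT, blockDiagonal_apply, Matrix.sum_apply, hR _ i hsi]

end Transform

theorem outer_inverse_MQR_via_QtW_general {m n p s : ℕ} (hsn : s ≤ n)
    (M : Matrix (Fin p) (Fin p) ℂ) (hM : IsUnit M.det)
    (A : Tensor m n p) (W : Tensor n m p)
    (P : Tensor m m p) (Q : Tensor n n p) (R : Tensor n m p)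
    (hQR : mprod M W P = mprod M Q R)
    (hP1 : mprod M P (mstar M P) = idT M m)
    (hQ2 : mprod M (mstar M Q) Q = idT M n)
    (hRvanish : ∀ l (i : Fin n), s ≤ (i : ℕ) → ∀ j, R l i j = 0)
    (hrRt : rankM M (horSlice hsn R) = s * p)
    (X : Tensor n m p)
    (hout : mprod M X (mprod M A X) = X)
    (hRX : rangeM M X = rangeM M W) (hNX : kerM M X = kerM M W) :
    ∃ Y : Tensor s s p,
      mprod M (mprod M (mstar M (latSlice hsn Q)) (mprod M W (mprod M A (latSlice hsn Q)))) Y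
        = idT M s ∧
      mprod M Y (mprod M (mstar M (latSlice hsn Q)) (mprod M W (mprod M A (latSlice hsn Q))))
        = idT M s ∧
      X = mprod M (latSlice hsn Q) (mprod M Y (mprod M (mstar M (latSlice hsn Q)) W)) := by
  have hP : matT M P * (matT M P)ᴴ = 1 := by
    rw [← matT_mstar hM, ← matT_mprod hM, hP1, matT_idT hM]
  have hWB : matT M W =
      matT M (latSlice hsn Q) * (matT M (horSlice hsn R) * (matT M P)ᴴ) := by
    rw [← Matrix.mul_one (matT M W), ← hP, ← Matrix.mul_assoc, ← matT_mprod hM, hQR,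
      ← mprod_latSlice_horSlice hM hsn Q R hRvanish, matT_mprod hM, Matrix.mul_assoc]
  have hB : (matT M (horSlice hsn R) * (matT M P)ᴴ).rank = Fintype.card (Fin s × Fin p) := by
    rw [rank_mul_eq_left_of_isUnit_det _ _ (isUnit_det_of_left_inverse hP)]
    simpa [rankM] using hrRt
  obtain ⟨hT, hX⟩ := isUnit_and_eq_of_outerInverse
    (conjTranspose_matT_latSlice_mul_self hM hsn hQ2) hWB hB
    (by simpa only [matT_mprod hM, Matrix.mul_assoc] using congrArg (matT M) hout) hRX.le hNX.le
  simp only [Matrix.mul_assoc, isUnit_iff_isUnit_det] at hT hX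
  obtain ⟨Y, hY⟩ := exists_matT_eq_inv hM
    (T := mprod M (mstar M (latSlice hsn Q)) (mprod M W (mprod M A (latSlice hsn Q))))
    (by simpa only [matT_mprod hM, matT_mstar hM, isUnit_iff_isUnit_det] using hT)
  refine ⟨Y, ?_, ?_, ?_⟩ <;> apply matT_injective hM <;>
    simp only [matT_mprod hM, matT_mstar hM, matT_idT hM, hY]
  · exact mul_nonsing_inv _ hT
  · exact nonsing_inv_mul _ hT
  · exact hX

/-- Theorem 3.3 (d): expression of the outer inverse using only `Q̃` and `W`. -/
theorem outer_inverse_MQR_via_QtW {m n p r s : ℕ} (hsn : s ≤ n)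
    (M : Matrix (Fin p) (Fin p) ℂ) (hM : IsUnit M.det)
    (A : Tensor m n p) (W : Tensor n m p)
    (P : Tensor m m p) (Q : Tensor n n p) (R : Tensor n m p)
    (hrA : rankM M A = r * p) (hrW : rankM M W = s * p) (hle : s * p ≤ r * p)
    (hQR : mprod M W P = mprod M Q R)
    (hP1 : mprod M P (mstar M P) = idT M m) (hP2 : mprod M (mstar M P) P = idT M m)
    (hQ1 : mprod M Q (mstar M Q) = idT M n) (hQ2 : mprod M (mstar M Q) Q = idT M n)
    (hrR : rankM M R = s * p)
    (hRvanish : ∀ l (i : Fin n), s ≤ (i : ℕ) → ∀ j, R l i j = 0)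
    (hrRt : rankM M (horSlice hsn R) = s * p)
    (X : Tensor n m p)
    (hout : mprod M X (mprod M A X) = X)
    (hRX : rangeM M X = rangeM M W) (hNX : kerM M X = kerM M W) :
    ∃ Y : Tensor s s p,
      mprod M (mprod M (mstar M (latSlice hsn Q)) (mprod M W (mprod M A (latSlice hsn Q)))) Y
        = idT M s ∧
      mprod M Y (mprod M (mstar M (latSlice hsn Q)) (mprod M W (mprod M A (latSlice hsn Q))))
        = idT M s ∧
      X = mprod M (latSlice hsn Q) (mprod M Y (mprod M (mstar M (latSlice hsn Q)) W)) :=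
  outer_inverse_MQR_via_QtW_general hsn M hM A W P Q R hQR hP1 hQ2 hRvanish hrRt X hout hRX hNX
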